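/- arXiv:2208.11741 — 2 statements merged into one kernel-verified Lean document; each statement's English description precedes it below -/
import Mathlib

section
/- Let q : [0,h] → ℝ be continuous, h > 0, μ₁ < 0, and let φ₁ : [0,h] → ℝ be C² with −φ₁'' − q φ₁ = μ₁ φ₁ on (0,h), φ₁(0) = φ₁(h) = 0, φ₁ > 0 on (0,h), and φ₁'(h) < 0. Suppose τ ∈ ℝ with τ² < −μ₁ and γ : [0,h] → ℝ is C² with −γ'' − q γ + τ² γ = 0 on (0,h), γ(0) = 0, γ(h) = 1. Then γ takes a strictly negative value at some point of (0,h); in particular γ changes sign on (0,h). -/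
/-!
Let `W = γ φ₁' - γ' φ₁` be the Wronskian. Subtracting the two equations gives
`W' = (-μ₁ - τ²) γ φ₁`, and integrating over `[0, h]` with the boundary values
`γ(0) = φ₁(0) = φ₁(h) = 0`, `γ(h) = 1` yields `(-μ₁ - τ²) ∫₀ʰ γ φ₁ = φ₁'(h) < 0`.
Since `-μ₁ - τ² > 0` and `φ₁ > 0` inside, `γ` must be negative somewhere in `(0, h)`,
while `γ(h) = 1` and continuity give positive values just left of `h`.
-/

open Set Filter Topology MeasureTheory

theorem hasDerivAt_wronskian {f f' f'' g g' g'' : ℝ → ℝ} {y : ℝ}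
    (hf : HasDerivAt f (f' y) y) (hf' : HasDerivAt f' (f'' y) y)
    (hg : HasDerivAt g (g' y) y) (hg' : HasDerivAt g' (g'' y) y) :
    HasDerivAt (fun x => f x * g' x - f' x * g x) (f y * g'' y - f'' y * g y) y :=
  ((hf.mul hg').sub (hf'.mul hg)).congr_deriv (by ring)

theorem sub_mul_integral_mul_eq_wronskian_sub {a b μ ν : ℝ} {q f f' f'' g g' g'' : ℝ → ℝ}
    (hab : a ≤ b)
    (hf : ∀ y ∈ Icc a b, HasDerivAt f (f' y) y) (hf' : ∀ y ∈ Icc a b, HasDerivAt f' (f'' y) y)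
    (hg : ∀ y ∈ Icc a b, HasDerivAt g (g' y) y) (hg' : ∀ y ∈ Icc a b, HasDerivAt g' (g'' y) y)
    (hfeq : ∀ y ∈ Ioo a b, -f'' y - q y * f y = μ * f y)
    (hgeq : ∀ y ∈ Ioo a b, -g'' y - q y * g y = ν * g y) :
    (μ - ν) * ∫ y in a..b, f y * g y
      = (f b * g' b - f' b * g b) - (f a * g' a - f' a * g a) := by
  have hcont : ∀ {u u' : ℝ → ℝ}, (∀ y ∈ Icc a b, HasDerivAt u (u' y) y) →
      ContinuousOn u (Icc a b) :=
    fun hu y hy => (hu y hy).continuousAt.continuousWithinAt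
  rw [← intervalIntegral.integral_const_mul]
  refine intervalIntegral.integral_eq_sub_of_hasDerivAt_of_le hab
    (((hcont hf).mul (hcont hg')).sub ((hcont hf').mul (hcont hg))) (fun y hy => ?_) ?_
  · have hy' := Ioo_subset_Icc_self hy
    refine (hasDerivAt_wronskian (hf y hy') (hf' y hy') (hg y hy') (hg' y hy')).congr_deriv ?_
    linear_combination g y * hfeq y hy - f y * hgeq y hy
  · exact (continuousOn_const.mul ((hcont hf).mul (hcont hg))).intervalIntegrable_of_Icc hab

theorem exists_mem_Ioo_neg_of_intervalIntegral_neg {a b : ℝ} {F : ℝ → ℝ} (hab : a ≤ b)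
    (hF : ∫ y in a..b, F y < 0) : ∃ y ∈ Ioo a b, F y < 0 := by
  by_contra! hnonneg
  rw [intervalIntegral.integral_of_le hab, integral_Ioc_eq_integral_Ioo] at hF
  exact hF.not_ge (setIntegral_nonneg measurableSet_Ioo hnonneg)

theorem exists_mem_Ioo_pos_of_continuousAt {a b : ℝ} {f : ℝ → ℝ} (hab : a < b)
    (hf : ContinuousAt f b) (hfb : 0 < f b) : ∃ y ∈ Ioo a b, 0 < f y :=
  ((show ∀ᶠ y in 𝓝[<] b, y ∈ Ioo a b from Ioo_mem_nhdsLT hab).and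
    (nhdsWithin_le_nhds (hf.eventually (lt_mem_nhds hfb)))).exists

theorem stmt_4_general (h μ₁ τ : ℝ) (hh : 0 < h) (hτ : τ ^ 2 < -μ₁)
    (q : ℝ → ℝ)
    (φ₁ φ₁' φ₁'' γ γ' γ'' : ℝ → ℝ)
    (hφ1 : ∀ y ∈ Set.Icc 0 h, HasDerivAt φ₁ (φ₁' y) y)
    (hφ2 : ∀ y ∈ Set.Icc 0 h, HasDerivAt φ₁' (φ₁'' y) y)
    (hφeq : ∀ y ∈ Set.Ioo 0 h, -(φ₁'' y) - q y * φ₁ y = μ₁ * φ₁ y)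
    (hφ0 : φ₁ 0 = 0) (hφh : φ₁ h = 0)
    (hφpos : ∀ y ∈ Set.Ioo 0 h, 0 < φ₁ y)
    (hφ'h : φ₁' h < 0)
    (hγ1 : ∀ y ∈ Set.Icc 0 h, HasDerivAt γ (γ' y) y)
    (hγ2 : ∀ y ∈ Set.Icc 0 h, HasDerivAt γ' (γ'' y) y)
    (hγeq : ∀ y ∈ Set.Ioo 0 h, -(γ'' y) - q y * γ y + τ ^ 2 * γ y = 0)
    (hγ0 : γ 0 = 0) (hγh : γ h = 1) :
    (∃ y ∈ Set.Ioo 0 h, γ y < 0) ∧ (∃ y ∈ Set.Ioo 0 h, 0 < γ y) := by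
  have hγeq' : ∀ y ∈ Ioo 0 h, -γ'' y - q y * γ y = -τ ^ 2 * γ y := fun y hy => by
    linarith [hγeq y hy]
  have hgreen := sub_mul_integral_mul_eq_wronskian_sub hh.le hγ1 hγ2 hφ1 hφ2 hγeq' hφeq
  rw [hγ0, hγh, hφ0, hφh] at hgreen
  have hint : ∫ y in (0 : ℝ)..h, γ y * φ₁ y < 0 :=
    neg_of_mul_neg_right (a := -τ ^ 2 - μ₁) (by linarith) (by linarith)
  obtain ⟨y, hy, hneg⟩ := exists_mem_Ioo_neg_of_intervalIntegral_neg hh.le hint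
  refine ⟨⟨y, hy, neg_of_mul_neg_left hneg (hφpos y hy).le⟩, ?_⟩
  exact exists_mem_Ioo_pos_of_continuousAt hh
    (hγ1 h (right_mem_Icc.2 hh.le)).continuousAt (hγh ▸ one_pos)

/-- If φ₁ > 0 is a Dirichlet eigenfunction with eigenvalue μ₁ < 0, φ₁'(h) < 0,
and τ² < -μ₁, then the solution γ of -γ'' - qγ + τ²γ = 0 with γ(0)=0, γ(h)=1
takes a strictly negative value in (0,h); in particular γ changes sign. -/
theorem stmt_4 (h μ₁ τ : ℝ) (hh : 0 < h) (hμ : μ₁ < 0) (hτ : τ ^ 2 < -μ₁)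
    (q : ℝ → ℝ) (hq : ContinuousOn q (Set.Icc 0 h))
    (φ₁ φ₁' φ₁'' γ γ' γ'' : ℝ → ℝ)
    (hφ1 : ∀ y ∈ Set.Icc 0 h, HasDerivAt φ₁ (φ₁' y) y)
    (hφ2 : ∀ y ∈ Set.Icc 0 h, HasDerivAt φ₁' (φ₁'' y) y)
    (hφ3 : ContinuousOn φ₁'' (Set.Icc 0 h))
    (hφeq : ∀ y ∈ Set.Ioo 0 h, -(φ₁'' y) - q y * φ₁ y = μ₁ * φ₁ y)
    (hφ0 : φ₁ 0 = 0) (hφh : φ₁ h = 0)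
    (hφpos : ∀ y ∈ Set.Ioo 0 h, 0 < φ₁ y)
    (hφ'h : φ₁' h < 0)
    (hγ1 : ∀ y ∈ Set.Icc 0 h, HasDerivAt γ (γ' y) y)
    (hγ2 : ∀ y ∈ Set.Icc 0 h, HasDerivAt γ' (γ'' y) y)
    (hγ3 : ContinuousOn γ'' (Set.Icc 0 h))
    (hγeq : ∀ y ∈ Set.Ioo 0 h, -(γ'' y) - q y * γ y + τ ^ 2 * γ y = 0)
    (hγ0 : γ 0 = 0) (hγh : γ h = 1) :
    (∃ y ∈ Set.Ioo 0 h, γ y < 0) ∧ (∃ y ∈ Set.Ioo 0 h, 0 < γ y) :=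
  stmt_4_general h μ₁ τ hh hτ q φ₁ φ₁' φ₁'' γ γ' γ'' hφ1 hφ2 hφeq hφ0 hφh hφpos hφ'h hγ1 hγ2 hγeq
    hγ0 hγh
end

section
/- Let p : ℝ² → ℝ be a homogeneous harmonic polynomial of degree n > 2, not identically zero, vanishing on both lines {x = 0} and {y = 0}. Then p takes both strictly positive and strictly negative values on the open quadrant {(x,y) : x > 0, y > 0}. -/
open MvPolynomial Finset Complex

/-! Write `p = ∑ aₖ xᵏ yⁿ⁻ᵏ`. Harmonicity is the two-step recurrence
`(k + 1)(k + 2) aₖ₊₂ + (n - k)(n - k - 1) aₖ = 0`, which the coefficients of `Im ((y + i x)ⁿ)`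
satisfy as well. Vanishing on `{x = 0}` gives `a₀ = 0`, so `p = c · Im ((y + i x)ⁿ)` with
`c = a₁ / n ≠ 0`; in polar form `p (r sin θ, r cos θ) = c rⁿ sin (n θ)`. For `n ≥ 3` the angle `n θ`
sweeps `(0, 3π/2)` as `θ` runs over `(0, π/2)`, so `sin (n θ)` takes both signs. -/

theorem eq_zero_of_second_order_recurrence {R : Type*} [Semiring R] [NoZeroDivisors R]
    {α β u : ℕ → R} {n : ℕ} (hα : ∀ k, α k ≠ 0)
    (hrec : ∀ k, k + 2 ≤ n → α k * u (k + 2) + β k * u k = 0) (h0 : u 0 = 0) (h1 : u 1 = 0) :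
    ∀ k ≤ n, u k = 0 := by
  intro k
  induction k using Nat.twoStepInduction with
  | zero => exact fun _ ↦ h0
  | one => exact fun _ ↦ h1
  | more k ih _ =>
    intro hk
    have h := hrec k hk
    rw [ih (by omega), mul_zero, add_zero] at h
    exact (mul_eq_zero.1 h).resolve_left (hα k)

theorem Nat.mul_choose_add_two (n k : ℕ) :
    (k + 1) * (k + 2) * n.choose (k + 2) = (n - k) * (n - k - 1) * n.choose k := by
  have h1 := Nat.choose_succ_right_eq n k
  have h2 := Nat.choose_succ_right_eq n (k + 1)
  rw [show n - (k + 1) = n - k - 1 by omega] at h2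
  calc (k + 1) * (k + 2) * n.choose (k + 2) = (k + 1) * n.choose (k + 1) * (n - k - 1) := by
        rw [mul_assoc, mul_comm (k + 2), h2]; ring
    _ = (n - k) * (n - k - 1) * n.choose k := by rw [mul_comm (k + 1), h1]; ring

theorem im_ofReal_add_ofReal_mul_I_pow (x y : ℝ) (n : ℕ) :
    ((y + x * I) ^ n).im = ∑ k ∈ range (n + 1), (I ^ k).im * n.choose k * x ^ k * y ^ (n - k) := by
  rw [add_comm, add_pow, im_sum]
  refine sum_congr rfl fun k _ ↦ ?_
  rw [mul_pow, mul_comm (_ ^ k), mul_assoc, mul_assoc, ← ofReal_pow, ← ofReal_pow,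
    ← ofReal_natCast, ← ofReal_mul, ← ofReal_mul, im_mul_ofReal]
  ring

theorem im_I_pow_mul_choose_add_two (n k : ℕ) :
    (((k + 1) * (k + 2) : ℕ) : ℝ) * ((I ^ (k + 2)).im * n.choose (k + 2)) +
      (((n - k) * (n - k - 1) : ℕ) : ℝ) * ((I ^ k).im * n.choose k) = 0 := by
  have h := congrArg (fun m : ℕ ↦ (m : ℝ)) (Nat.mul_choose_add_two n k)
  push_cast at h ⊢
  rw [pow_add, I_sq, mul_neg_one, neg_im]
  linear_combination (-(I ^ k).im) * h

theorem im_cos_add_sin_mul_I_pow (θ : ℝ) (n : ℕ) :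
    ((Real.cos θ + Real.sin θ * I) ^ n).im = Real.sin (n * θ) := by
  rw [ofReal_cos, ofReal_sin, cos_add_sin_mul_I_pow, ← ofReal_natCast, ← ofReal_mul,
    ← ofReal_cos, ← ofReal_sin, add_im, ofReal_im, im_ofReal_mul, I_im, mul_one, zero_add]

theorem exists_pos_mul_sin_nat_mul {c : ℝ} (hc : c ≠ 0) {n : ℕ} (hn : 2 < n) :
    ∃ θ ∈ Set.Ioo 0 (Real.pi / 2), 0 < c * Real.sin (n * θ) := by
  have hn' : (3 : ℝ) ≤ n := by exact_mod_cast hn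
  have hpi := Real.pi_pos
  rcases hc.lt_or_gt with hc | hc
  · refine ⟨7 * Real.pi / (6 * n), ⟨by positivity, ?_⟩, ?_⟩
    · rw [div_lt_div_iff₀ (by positivity) (by norm_num)]; nlinarith
    · rw [show (n : ℝ) * (7 * Real.pi / (6 * n)) = Real.pi / 6 + Real.pi by field_simp; ring,
        Real.sin_add_pi, Real.sin_pi_div_six]
      linarith
  · refine ⟨Real.pi / (2 * n), ⟨by positivity, ?_⟩, ?_⟩
    · rw [div_lt_div_iff₀ (by positivity) (by norm_num)]; nlinarith
    · rw [show (n : ℝ) * (Real.pi / (2 * n)) = Real.pi / 2 by field_simp, Real.sin_pi_div_two]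
      linarith

namespace MvPolynomial

variable {R : Type*} [CommSemiring R]

noncomputable def bivariateCoeff (p : MvPolynomial (Fin 2) R) (n k : ℕ) : R :=
  coeff (Finsupp.single 0 k + Finsupp.single 1 (n - k)) p

theorem IsHomogeneous.eval_fin_two {p : MvPolynomial (Fin 2) R} {n : ℕ}
    (hp : p.IsHomogeneous n) (x y : R) :
    eval ![x, y] p = ∑ k ∈ range (n + 1), bivariateCoeff p n k * x ^ k * y ^ (n - k) := by
  rw [eval_eq']
  symm
  refine sum_bij_ne_zero (fun k _ _ ↦ Finsupp.single 0 k + Finsupp.single 1 (n - k))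
    (fun k _ h ↦ mem_support_iff.2 (left_ne_zero_of_mul (left_ne_zero_of_mul h)))
    (fun k _ _ l _ _ h ↦ by simpa using DFunLike.congr_fun h 0)
    (fun d _ h ↦ ?_) (fun k _ _ ↦ by simp [bivariateCoeff, Fin.prod_univ_two, mul_assoc])
  have hdeg : d 0 + d 1 = n := by
    simpa [Finsupp.weight_apply, Finsupp.sum_fintype, Fin.sum_univ_two]
      using hp (left_ne_zero_of_mul h)
  have hd : Finsupp.single 0 (d 0) + Finsupp.single 1 (n - d 0) = d := by
    ext i; fin_cases i <;> simp; omega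
  refine ⟨d 0, mem_range.2 (by omega), ?_, hd⟩
  rw [bivariateCoeff, hd, show n - d 0 = d 1 by omega, mul_assoc]
  simpa [Fin.prod_univ_two] using h

theorem bivariateCoeff_add_two {p : MvPolynomial (Fin 2) R}
    (hharm : pderiv 0 (pderiv 0 p) + pderiv 1 (pderiv 1 p) = 0) {n k : ℕ} (hk : k + 2 ≤ n) :
    (((k + 1) * (k + 2) : ℕ) : R) * bivariateCoeff p n (k + 2) +
      (((n - k) * (n - k - 1) : ℕ) : R) * bivariateCoeff p n k = 0 := by
  obtain ⟨m, rfl⟩ := Nat.exists_eq_add_of_le hk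
  have h := congrArg (coeff (Finsupp.single 0 k + Finsupp.single 1 m)) hharm
  rw [coeff_add, coeff_zero, coeff_pderiv, coeff_pderiv, coeff_pderiv, coeff_pderiv] at h
  have e0 : Finsupp.single 0 k + Finsupp.single 1 m + Finsupp.single 0 1 + Finsupp.single 0 1 =
      Finsupp.single (0 : Fin 2) (k + 2) + Finsupp.single 1 (k + 2 + m - (k + 2)) := by
    ext i; fin_cases i <;> simp
  have e1 : Finsupp.single 0 k + Finsupp.single 1 m + Finsupp.single 1 1 + Finsupp.single 1 1 =
      Finsupp.single (0 : Fin 2) k + Finsupp.single 1 (k + 2 + m - k) := by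
    ext i; fin_cases i <;> simp; omega
  rw [e0, e1] at h
  simp only [Finsupp.coe_add, Pi.add_apply, Finsupp.single_eq_same,
    Finsupp.single_eq_of_ne (show (1 : Fin 2) ≠ 0 by decide),
    Finsupp.single_eq_of_ne (show (0 : Fin 2) ≠ 1 by decide)] at h
  rw [bivariateCoeff, bivariateCoeff, ← h, show k + 2 + m - k = m + 2 by omega]
  push_cast
  ring

theorem IsHomogeneous.eval_eq_mul_im_pow {p : MvPolynomial (Fin 2) ℝ} {n : ℕ} (hn : n ≠ 0)
    (hhom : p.IsHomogeneous n) (hharm : pderiv 0 (pderiv 0 p) + pderiv 1 (pderiv 1 p) = 0)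
    (hvan : eval ![0, 1] p = 0) (x y : ℝ) :
    eval ![x, y] p = bivariateCoeff p n 1 / n * ((y + x * I) ^ n).im := by
  set c := bivariateCoeff p n 1 / n
  have h0 : bivariateCoeff p n 0 = 0 := by
    simpa [hhom.eval_fin_two, sum_range_succ'] using hvan
  have hcoeff : ∀ k ≤ n, bivariateCoeff p n k - c * ((I ^ k).im * n.choose k) = 0 :=
    eq_zero_of_second_order_recurrence (α := fun k ↦ (((k + 1) * (k + 2) : ℕ) : ℝ))
      (β := fun k ↦ (((n - k) * (n - k - 1) : ℕ) : ℝ)) (fun k ↦ by positivity)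
      (fun k hk ↦ by
        linear_combination bivariateCoeff_add_two hharm hk -
          c * im_I_pow_mul_choose_add_two n k)
      (by simp [h0]) (by simp [c, hn])
  rw [hhom.eval_fin_two, im_ofReal_add_ofReal_mul_I_pow, mul_sum]
  refine sum_congr rfl fun k hk ↦ ?_
  rw [sub_eq_zero.1 (hcoeff k (Nat.lt_succ_iff.1 (mem_range.1 hk)))]
  ring

end MvPolynomial

theorem stmt_11_general (n : ℕ) (hn : 2 < n) (p : MvPolynomial (Fin 2) ℝ)
    (hhom : p.IsHomogeneous n) (hp : p ≠ 0)
    (hharm : pderiv 0 (pderiv 0 p) + pderiv 1 (pderiv 1 p) = 0)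
    (hvanx : ∀ t : ℝ, eval ![0, t] p = 0) :
    (∃ x y : ℝ, 0 < x ∧ 0 < y ∧ 0 < eval ![x, y] p) ∧
      (∃ x y : ℝ, 0 < x ∧ 0 < y ∧ eval ![x, y] p < 0) := by
  have hform := hhom.eval_eq_mul_im_pow (by omega) hharm (hvanx 1)
  set c := bivariateCoeff p n 1 / n
  have hc : c ≠ 0 := by
    intro hc
    refine hp (MvPolynomial.funext fun v ↦ ?_)
    rw [show v = ![v 0, v 1] by ext i; fin_cases i <;> rfl, hform, hc, zero_mul, map_zero]
  have hpolar (θ : ℝ) : eval ![Real.sin θ, Real.cos θ] p = c * Real.sin (n * θ) := by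
    rw [hform, im_cos_add_sin_mul_I_pow]
  have hquadrant {θ : ℝ} (hθ : θ ∈ Set.Ioo 0 (Real.pi / 2)) : 0 < Real.sin θ ∧ 0 < Real.cos θ :=
    ⟨Real.sin_pos_of_pos_of_lt_pi hθ.1 (by linarith [hθ.2, Real.pi_pos]),
      Real.cos_pos_of_mem_Ioo ⟨by linarith [hθ.1, Real.pi_pos], hθ.2⟩⟩
  obtain ⟨θ₁, hθ₁, hpos⟩ := exists_pos_mul_sin_nat_mul hc hn
  obtain ⟨θ₂, hθ₂, hneg⟩ := exists_pos_mul_sin_nat_mul (neg_ne_zero.2 hc) hn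
  refine ⟨⟨_, _, (hquadrant hθ₁).1, (hquadrant hθ₁).2, hpolar θ₁ ▸ hpos⟩,
    ⟨_, _, (hquadrant hθ₂).1, (hquadrant hθ₂).2, ?_⟩⟩
  rw [hpolar]
  linarith

/-- A nonzero homogeneous harmonic polynomial of degree n > 2 in two variables
vanishing on both coordinate lines takes both strictly positive and strictly
negative values on the open quadrant x > 0, y > 0. -/
theorem stmt_11 (n : ℕ) (hn : 2 < n) (p : MvPolynomial (Fin 2) ℝ)
    (hhom : p.IsHomogeneous n) (hp : p ≠ 0)
    (hharm : pderiv 0 (pderiv 0 p) + pderiv 1 (pderiv 1 p) = 0)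
    (hvanx : ∀ t : ℝ, eval ![0, t] p = 0)
    (hvany : ∀ t : ℝ, eval ![t, 0] p = 0) :
    (∃ x y : ℝ, 0 < x ∧ 0 < y ∧ 0 < eval ![x, y] p) ∧
      (∃ x y : ℝ, 0 < x ∧ 0 < y ∧ eval ![x, y] p < 0) :=
  stmt_11_general n hn p hhom hp hharm hvanx
end
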